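/- Let (X,d) be a metric space and suppose that along a geodesic segment [x,y] a 'coarse distance' function d_V on pairs of points satisfies the reverse triangle inequality: for any point a on [x,y], d_V(x,a) + d_V(a,y) ≤ d_V(x,y) + B, where B > 0 is a constant, together with the ordinary triangle inequality and symmetry. If [x,y] contains n subintervals [x₁,y₁],…,[xₙ,yₙ] with pairwise disjoint interiors, appearing in order along [x,y], and each satisfying d_V(xᵢ,yᵢ) ≥ d for some d > 4B, then d_V(x,y) ≥ (1/2)·n·d. -/
import Mathlib


/-- Cumulative contribution of subintervals along a geodesic modeled by `[0,T]`,
for a symmetric nonnegative coarse distance `dV` satisfying the reverse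
triangle inequality with constant `B`. -/
theorem stmt_3 (n : ℕ) (T B d : ℝ) (hT : 0 ≤ T) (hB : 0 < B) (hd : 4 * B < d)
    (dV : ℝ → ℝ → ℝ)
    (hsymm : ∀ s t, dV s t = dV t s)
    (hnonneg : ∀ s t, 0 ≤ dV s t)
    (hrev : ∀ s u t, 0 ≤ s → s ≤ u → u ≤ t → t ≤ T →
      dV s u + dV u t ≤ dV s t + B)
    (xs ys : ℕ → ℝ)
    (hx0 : 0 ≤ xs 0)
    (hlt : ∀ i < n, xs i < ys i)
    (hord : ∀ i, i + 1 < n → ys i ≤ xs (i + 1))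
    (hend : ∀ i < n, ys i ≤ T)
    (hbig : ∀ i < n, d ≤ dV (xs i) (ys i)) :
    (1 / 2 : ℝ) * n * d ≤ dV 0 T := by
  rcases Nat.eq_zero_or_pos n with h0 | hn
  · subst h0
    simpa using hnonneg 0 T
  · have hxnn : ∀ i, i < n → 0 ≤ xs i := by
      intro i
      induction i with
      | zero => intro _; exact hx0
      | succ j ih =>
        intro hi
        have hj : j < n := Nat.lt_of_succ_lt hi
        have h1 := hord j hi
        have h2 := hlt j hj
        have h3 := ih hj
        linarith
    have hynn : ∀ i, i < n → 0 ≤ ys i := fun i hi =>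
      le_of_lt (lt_of_le_of_lt (hxnn i hi) (hlt i hi))
    have key : ∀ i, i < n → ((i : ℝ) + 1) * d ≤ dV 0 (ys i) + (2 * ((i : ℝ) + 1) - 1) * B := by
      intro i
      induction i with
      | zero =>
        intro hi
        have h1 := hrev 0 (xs 0) (ys 0) le_rfl hx0 (le_of_lt (hlt 0 hi)) (hend 0 hi)
        have h2 := hbig 0 hi
        have h3 := hnonneg 0 (xs 0)
        push_cast
        linarith
      | succ j ih =>
        intro hi
        have hj : j < n := Nat.lt_of_succ_lt hi
        have hys : ys j ≤ xs (j + 1) := hord j hi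
        have hxy : xs (j + 1) < ys (j + 1) := hlt (j + 1) hi
        have hT' : ys (j + 1) ≤ T := hend (j + 1) hi
        have h1 := hrev 0 (ys j) (ys (j + 1)) le_rfl (hynn j hj)
          (le_trans hys (le_of_lt hxy)) hT'
        have h2 := hrev (ys j) (xs (j + 1)) (ys (j + 1)) (hynn j hj) hys
          (le_of_lt hxy) hT'
        have h3 := hbig (j + 1) hi
        have h4 := hnonneg (ys j) (xs (j + 1))
        have h5 := ih hj
        push_cast
        push_cast at h5
        linarith
    have hn1 : n - 1 < n := Nat.sub_lt hn one_pos
    have hk := key (n - 1) hn1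
    have hlast := hrev 0 (ys (n - 1)) T le_rfl (hynn _ hn1) (hend _ hn1) le_rfl
    have h0T : 0 ≤ dV (ys (n - 1)) T := hnonneg _ _
    have hc : ((n - 1 : ℕ) : ℝ) + 1 = (n : ℝ) := by
      have : ((n - 1 : ℕ) : ℝ) = (n : ℝ) - 1 := by
        rw [Nat.cast_sub hn]; simp
      linarith
    rw [hc] at hk
    have hn0 : (0 : ℝ) ≤ (n : ℝ) := Nat.cast_nonneg n
    have h4 : (n : ℝ) * (4 * B) ≤ (n : ℝ) * d := by
      exact mul_le_mul_of_nonneg_left (le_of_lt hd) hn0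
    linarith
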